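/- arXiv:0901.1404 — 4 statements merged into one kernel-verified Lean document; each statement's English description precedes it below -/
import Mathlib

section
/- Let ξ, η in SL(2,ℂ). If tr(ξηξ⁻¹η⁻¹) = 2, then the pair (ξ, η) acts reducibly on ℂ², i.e., there is a common eigenvector. Equivalently, if the span of {I, ξ, η, ξη} equals all of M₂(ℂ) (which forces irreducibility), then tr(ξηξ⁻¹η⁻¹) ≠ 2. -/
open Matrix

abbrev SL2C := Matrix.SpecialLinearGroup (Fin 2) ℂ

noncomputable def trC (g : SL2C) : ℂ := Matrix.trace (g : Matrix (Fin 2) (Fin 2) ℂ)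

/-! For matrices of determinant one, `tr (A B A⁻¹ B⁻¹) = 2 - det ⁅A, B⁆`, so the hypothesis says
that `M = ⁅A, B⁆` is singular. Since `tr M = tr (M A) = tr (M B) = 0`, the polarized Cayley–Hamilton
identity `M X + X M = tr X • M` shows that `ker M` is invariant under `A` and `B`. It is nonzero, and
`A`, `B` commute on it, so they have a common eigenvector there. Conversely, the matrices having a
given vector as eigenvector form a proper subalgebra, which contains `1, A, B, A B`. -/

namespace Module.End

variable {K V : Type*} [Field K] [IsAlgClosed K] [AddCommGroup V] [Module K V]
  [FiniteDimensional K V]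

theorem exists_common_eigenvector_of_commute [Nontrivial V] {f g : End K V}
    (hfg : Commute f g) : ∃ v ≠ 0, (∃ a : K, f v = a • v) ∧ ∃ b : K, g v = b • v := by
  obtain ⟨a, ha⟩ := f.exists_eigenvalue
  have : Nontrivial (f.eigenspace a) := Submodule.nontrivial_iff_ne_bot.mpr ha
  obtain ⟨b, hb⟩ := exists_eigenvalue (g.restrict (mapsTo_genEigenspace_of_comm hfg a 1))
  obtain ⟨⟨v, hva⟩, hvb, hv0⟩ := hb.exists_hasEigenvector
  refine ⟨v, by simpa using hv0, ⟨a, mem_eigenspace_iff.mp hva⟩, b, ?_⟩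
  exact congrArg Subtype.val (mem_eigenspace_iff.mp hvb)

theorem exists_common_eigenvector_of_commute_on {f g : End K V} {W : Submodule K V}
    (hW : W ≠ ⊥) (hf : Set.MapsTo f W W) (hg : Set.MapsTo g W W)
    (hfg : ∀ w ∈ W, f (g w) = g (f w)) :
    ∃ v ≠ 0, (∃ a : K, f v = a • v) ∧ ∃ b : K, g v = b • v := by
  have : Nontrivial W := Submodule.nontrivial_iff_ne_bot.mpr hW
  have hcomm : Commute (f.restrict hf) (g.restrict hg) :=
    LinearMap.ext fun w => Subtype.ext (hfg w w.2)
  obtain ⟨⟨v, _⟩, hv0, ⟨a, ha⟩, b, hb⟩ := exists_common_eigenvector_of_commute hcomm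
  exact ⟨v, by simpa using hv0, ⟨a, congrArg Subtype.val ha⟩, b, congrArg Subtype.val hb⟩

end Module.End

namespace Matrix

section CommRing

variable {R : Type*} [CommRing R]

theorem trace_lie_mul_left {n : Type*} [Fintype n] (A B : Matrix n n R) :
    trace (⁅A, B⁆ * A) = 0 := by
  rw [Ring.lie_def, sub_mul, trace_sub, mul_assoc, trace_mul_comm A, sub_self]

theorem trace_lie_mul_right {n : Type*} [Fintype n] (A B : Matrix n n R) :
    trace (⁅A, B⁆ * B) = 0 := by
  rw [Ring.lie_def, sub_mul, trace_sub, mul_assoc B, trace_mul_comm B, mul_assoc, sub_self]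

theorem mul_add_mul_fin_two (X Y : Matrix (Fin 2) (Fin 2) R) :
    X * Y + Y * X = (trace (X * Y) - trace X * trace Y) • 1 + trace X • Y + trace Y • X := by
  ext i j
  fin_cases i <;> fin_cases j <;>
    simp [mul_apply, trace_fin_two, Fin.sum_univ_two] <;> ring

theorem mulVec_mulVec_eq_zero_of_trace_eq_zero {M X : Matrix (Fin 2) (Fin 2) R}
    (hM : trace M = 0) (hMX : trace (M * X) = 0) {v : Fin 2 → R} (hv : M *ᵥ v = 0) :
    M *ᵥ (X *ᵥ v) = 0 := by
  have hMX' : M * X = trace X • M - X * M := by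
    rw [eq_sub_iff_add_eq, mul_add_mul_fin_two, hM, hMX]
    simp
  rw [mulVec_mulVec, hMX', sub_mulVec, smul_mulVec, ← mulVec_mulVec, hv]
  simp

theorem trace_mul_mul_adjugate_mul_adjugate (A B : Matrix (Fin 2) (Fin 2) R) :
    trace (A * B * A.adjugate * B.adjugate) = 2 * A.det * B.det - det ⁅A, B⁆ := by
  simp [Ring.lie_def, adjugate_fin_two, trace_fin_two, det_fin_two, mul_apply, Fin.sum_univ_two]
  ring

end CommRing

variable {K : Type*} [Field K]

theorem exists_common_eigenvector_of_det_lie_eq_zero [IsAlgClosed K]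
    {A B : Matrix (Fin 2) (Fin 2) K} (h : det ⁅A, B⁆ = 0) :
    ∃ v ≠ 0, (∃ a : K, A *ᵥ v = a • v) ∧ ∃ b : K, B *ᵥ v = b • v := by
  have hM : trace ⁅A, B⁆ = 0 := by simp
  have hker {X : Matrix (Fin 2) (Fin 2) K} (hX : trace (⁅A, B⁆ * X) = 0) :
      Set.MapsTo (toLin' X) (LinearMap.ker (toLin' ⁅A, B⁆)) (LinearMap.ker (toLin' ⁅A, B⁆)) :=
    fun v hv => by
      simpa using mulVec_mulVec_eq_zero_of_trace_eq_zero hM hX (by simpa using hv)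
  have hne : LinearMap.ker (toLin' ⁅A, B⁆) ≠ ⊥ := by
    obtain ⟨v, hv0, hv⟩ := exists_mulVec_eq_zero_iff.mpr h
    exact (Submodule.ne_bot_iff _).mpr ⟨v, by simpa using hv, hv0⟩
  obtain ⟨v, hv0, ⟨a, ha⟩, b, hb⟩ := Module.End.exists_common_eigenvector_of_commute_on hne
    (hker (trace_lie_mul_left A B)) (hker (trace_lie_mul_right A B)) fun w hw => by
      simpa [Ring.lie_def, sub_mulVec, sub_eq_zero, mulVec_mulVec] using hw
  exact ⟨v, hv0, ⟨a, by simpa using ha⟩, b, by simpa using hb⟩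

variable {n : Type*} [Fintype n] [DecidableEq n]

def lineStabilizer (v : n → K) : Subalgebra K (Matrix n n K) where
  carrier := {X | ∃ c : K, X *ᵥ v = c • v}
  mul_mem' := by
    rintro X Y ⟨a, ha⟩ ⟨b, hb⟩
    exact ⟨a * b, by rw [← mulVec_mulVec, hb, mulVec_smul, ha, smul_smul, mul_comm]⟩
  add_mem' := by
    rintro X Y ⟨a, ha⟩ ⟨b, hb⟩
    exact ⟨a + b, by rw [add_mulVec, ha, hb, add_smul]⟩
  algebraMap_mem' c := ⟨c, by rw [Algebra.algebraMap_eq_smul_one, smul_mulVec, one_mulVec]⟩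

theorem mem_lineStabilizer {v : n → K} {X : Matrix n n K} :
    X ∈ lineStabilizer v ↔ ∃ c : K, X *ᵥ v = c • v :=
  Iff.rfl

theorem lineStabilizer_ne_top [Nontrivial n] {v : n → K} (hv : v ≠ 0) :
    lineStabilizer v ≠ ⊤ := by
  obtain ⟨i, hi⟩ : ∃ i, v i ≠ 0 := Function.ne_iff.mp hv
  obtain ⟨j, hji⟩ := exists_ne i
  intro htop
  have hX : single j i (1 : K) ∈ lineStabilizer v := htop ▸ Algebra.mem_top
  obtain ⟨c, hc⟩ := mem_lineStabilizer.mp hX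
  rw [single_mulVec_eq] at hc
  have hci : 0 = c * v i := by simpa [hji.symm] using congrFun hc i
  have hcj : v i = c * v j := by simpa using congrFun hc j
  obtain rfl : c = 0 := (mul_eq_zero.mp hci.symm).resolve_right hi
  exact hi (by simpa using hcj)

end Matrix

theorem trC_mul_mul_inv_mul_inv (ξ η : SL2C) :
    trC (ξ * η * ξ⁻¹ * η⁻¹) =
      2 - det ⁅(ξ : Matrix (Fin 2) (Fin 2) ℂ), (η : Matrix (Fin 2) (Fin 2) ℂ)⁆ := by
  change trace (ξ.1 * η.1 * adjugate ξ.1 * adjugate η.1) = _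
  rw [trace_mul_mul_adjugate_mul_adjugate, ξ.det_coe, η.det_coe]
  norm_num

theorem trace_comm_two_implies_reducible (ξ η : SL2C) :
    (trC (ξ * η * ξ⁻¹ * η⁻¹) = 2 →
      ∃ v : Fin 2 → ℂ, v ≠ 0 ∧
        (∃ a : ℂ, (ξ : Matrix (Fin 2) (Fin 2) ℂ).mulVec v = a • v) ∧
        (∃ b : ℂ, (η : Matrix (Fin 2) (Fin 2) ℂ).mulVec v = b • v)) ∧
    (Submodule.span ℂ
        {(1 : Matrix (Fin 2) (Fin 2) ℂ), (ξ : Matrix (Fin 2) (Fin 2) ℂ),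
          (η : Matrix (Fin 2) (Fin 2) ℂ),
          (ξ : Matrix (Fin 2) (Fin 2) ℂ) * (η : Matrix (Fin 2) (Fin 2) ℂ)} = ⊤ →
      trC (ξ * η * ξ⁻¹ * η⁻¹) ≠ 2) := by
  have reducible (h : trC (ξ * η * ξ⁻¹ * η⁻¹) = 2) :
      ∃ v : Fin 2 → ℂ, v ≠ 0 ∧
        (∃ a : ℂ, (ξ : Matrix (Fin 2) (Fin 2) ℂ) *ᵥ v = a • v) ∧
        (∃ b : ℂ, (η : Matrix (Fin 2) (Fin 2) ℂ) *ᵥ v = b • v) :=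
    exists_common_eigenvector_of_det_lie_eq_zero <| by
      rw [trC_mul_mul_inv_mul_inv] at h
      linear_combination -h
  refine ⟨reducible, fun hspan h => ?_⟩
  obtain ⟨v, hv, hξ, hη⟩ := reducible h
  refine lineStabilizer_ne_top hv (Algebra.toSubmodule_eq_top.mp (top_le_iff.mp ?_))
  rw [← hspan, Submodule.span_le]
  rintro X (rfl | rfl | rfl | rfl)
  exacts [(lineStabilizer v).one_mem, hξ, hη, (lineStabilizer v).mul_mem hξ hη]
end

section
/- For any ξ, η, ζ in SL(2,ℂ) with t₁ = tr ξ, t₂ = tr η, t₃ = tr ζ, t₁₂ = tr(ξη), t₂₃ = tr(ηζ), t₁₃ = tr(ξζ), one has tr(ξηζ)·tr(ξζη) = (t₁² + t₂² + t₃²) + (t₁₂² + t₂₃² + t₁₃²) − (t₁t₂t₁₂ + t₂t₃t₂₃ + t₃t₁t₁₃) + t₁₂t₂₃t₁₃ − 4. -/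
open Matrix

/-!
In `SL(2)` Cayley–Hamilton reads `g⁻¹ = tr g - g`, which yields the two reduction rules
`tr (g h⁻¹) = tr g tr h - tr (g h)` and `g h g = tr (g h) g - h⁻¹`.
For `X = ξηζ` and `Y = ξζη` the first rule splits `tr X tr Y` into `tr (X Y) + tr (X Y⁻¹)`.
Here `X Y⁻¹` is conjugate to the commutator of `η` and `ζ`, and `X Y` is conjugate to
`(ηξη)(ζξζ)`; the rules reduce the traces of both to the traces of `ξ, η, ζ` and of their
pairwise products.
-/

theorem Matrix.adjugate_fin_two_eq_trace_smul_one_sub {R : Type*} [CommRing R]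
    (A : Matrix (Fin 2) (Fin 2) R) : adjugate A = trace A • 1 - A := by
  ext i j
  fin_cases i <;> fin_cases j <;> simp [adjugate_fin_two, trace_fin_two]

/-- Cayley–Hamilton in dimension two. -/
theorem Matrix.mul_self_fin_two_eq {R : Type*} [CommRing R] (A : Matrix (Fin 2) (Fin 2) R) :
    A * A = trace A • A - det A • 1 := by
  have h := mul_adjugate A
  rw [adjugate_fin_two_eq_trace_smul_one_sub, mul_sub, mul_smul_comm, mul_one] at h
  rw [← h, sub_sub_cancel]

theorem Matrix.trace_smul_sub_mul_smul_sub {n R : Type*} [Fintype n] [CommRing R]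
    (a b : R) (A B C D : Matrix n n R) :
    trace ((a • A - B) * (b • C - D)) =
      a * b * trace (A * C) - a * trace (A * D) - b * trace (B * C) + trace (B * D) := by
  simp only [sub_mul, mul_sub, smul_mul_assoc, mul_smul_comm, trace_sub, trace_smul, smul_eq_mul]
  ring

namespace SL2

open Matrix.SpecialLinearGroup

variable {R : Type*} [CommRing R]

def tr (g : SpecialLinearGroup (Fin 2) R) : R := trace (g : Matrix (Fin 2) (Fin 2) R)

variable (g h k : SpecialLinearGroup (Fin 2) R)

theorem trace_coe : trace (g : Matrix (Fin 2) (Fin 2) R) = tr g := rfl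

theorem trace_coe_mul :
    trace ((g : Matrix (Fin 2) (Fin 2) R) * (h : Matrix (Fin 2) (Fin 2) R)) = tr (g * h) := by
  rw [tr, coe_mul]

theorem tr_mul_comm : tr (g * h) = tr (h * g) := by
  rw [← trace_coe_mul, trace_mul_comm, trace_coe_mul]

theorem tr_conj : tr (g * h * g⁻¹) = tr h := by
  rw [tr_mul_comm, inv_mul_cancel_left]

theorem coe_inv_eq_tr_smul_sub :
    ((g⁻¹ : SpecialLinearGroup (Fin 2) R) : Matrix (Fin 2) (Fin 2) R) =
      tr g • 1 - (g : Matrix (Fin 2) (Fin 2) R) := by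
  rw [coe_inv, adjugate_fin_two_eq_trace_smul_one_sub, trace_coe]

theorem coe_mul_self :
    ((g * g : SpecialLinearGroup (Fin 2) R) : Matrix (Fin 2) (Fin 2) R) =
      tr g • (g : Matrix (Fin 2) (Fin 2) R) - 1 := by
  rw [coe_mul, mul_self_fin_two_eq, det_coe, one_smul, trace_coe]

theorem coe_mul_mul_self :
    ((g * h * g : SpecialLinearGroup (Fin 2) R) : Matrix (Fin 2) (Fin 2) R) =
      tr (g * h) • (g : Matrix (Fin 2) (Fin 2) R) - ↑h⁻¹ := by
  rw [show g * h * g = g * h * (g * h) * h⁻¹ by group, coe_mul, coe_mul_self, sub_mul,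
    smul_mul_assoc, one_mul, ← coe_mul, mul_inv_cancel_right]

theorem tr_inv : tr g⁻¹ = tr g := by
  rw [← trace_coe, coe_inv_eq_tr_smul_sub, trace_sub, trace_smul, trace_one, trace_coe,
    Fintype.card_fin, Nat.cast_ofNat, smul_eq_mul]
  ring

theorem tr_mul_inv : tr (g * h⁻¹) = tr g * tr h - tr (g * h) := by
  rw [← trace_coe_mul, coe_inv_eq_tr_smul_sub, mul_sub, mul_smul_comm, mul_one, trace_sub,
    trace_smul, trace_coe, trace_coe_mul, smul_eq_mul, mul_comm]

theorem tr_mul_self : tr (g * g) = tr g ^ 2 - 2 := by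
  rw [← trace_coe, coe_mul_self, trace_sub, trace_smul, trace_one, trace_coe, Fintype.card_fin,
    Nat.cast_ofNat, smul_eq_mul]
  ring

theorem tr_commutator :
    tr (g * h * g⁻¹ * h⁻¹) =
      tr g ^ 2 + tr h ^ 2 + tr (g * h) ^ 2 - tr g * tr h * tr (g * h) - 2 := by
  have hsq : tr (g * h * (h * g)) = tr (g * g * (h * h)) := by
    rw [show g * h * (h * g) = g⁻¹ * (g * g * (h * h)) * g⁻¹⁻¹ by group, tr_conj]
  have hexp : tr (g * g * (h * h)) = tr g * tr h * tr (g * h) - tr g ^ 2 - tr h ^ 2 + 2 := by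
    rw [← trace_coe, coe_mul, coe_mul_self, coe_mul_self, trace_smul_sub_mul_smul_sub]
    simp only [trace_coe_mul, mul_one, one_mul, trace_one, trace_coe, Fintype.card_fin,
      Nat.cast_ofNat]
    ring
  rw [show g * h * g⁻¹ * h⁻¹ = g * h * (h * g)⁻¹ by group, tr_mul_inv, tr_mul_comm h g, hsq, hexp]
  ring

theorem tr_sandwich_mul_sandwich :
    tr (g * h * g * (k * h * k)) =
      tr (g * h) * tr (k * h) * tr (g * k) - tr (g * h) * (tr g * tr h - tr (g * h))
        - tr (k * h) * (tr k * tr h - tr (k * h)) + tr h ^ 2 - 2 := by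
  rw [← trace_coe, coe_mul, coe_mul_mul_self, coe_mul_mul_self, trace_smul_sub_mul_smul_sub]
  simp only [trace_coe_mul]
  rw [tr_mul_inv, tr_mul_comm h⁻¹ k, tr_mul_inv, tr_mul_self, tr_inv]
  ring

theorem tr_mul_mul_mul_tr_mul_mul :
    tr (g * h * k) * tr (g * k * h) =
      (tr g ^ 2 + tr h ^ 2 + tr k ^ 2) + (tr (g * h) ^ 2 + tr (h * k) ^ 2 + tr (g * k) ^ 2) -
        (tr g * tr h * tr (g * h) + tr h * tr k * tr (h * k) + tr k * tr g * tr (g * k)) +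
          tr (g * h) * tr (h * k) * tr (g * k) - 4 := by
  have hprod : tr (g * h * k * (g * k * h)) = tr (h * g * h * (k * g * k)) := by
    rw [show g * h * k * (g * k * h) = h⁻¹ * (h * g * h * (k * g * k)) * h⁻¹⁻¹ by group,
      tr_conj]
  have hquot : tr (g * h * k * (g * k * h)⁻¹) = tr (h * k * h⁻¹ * k⁻¹) := by
    rw [show g * h * k * (g * k * h)⁻¹ = g * (h * k * h⁻¹ * k⁻¹) * g⁻¹ by group, tr_conj]
  calc tr (g * h * k) * tr (g * k * h)
      = tr (g * h * k * (g * k * h)) + tr (g * h * k * (g * k * h)⁻¹) := by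
        rw [tr_mul_inv]; ring
    _ = tr (h * g * h * (k * g * k)) + tr (h * k * h⁻¹ * k⁻¹) := by rw [hprod, hquot]
    _ = _ := by
      rw [tr_sandwich_mul_sandwich, tr_commutator, tr_mul_comm h g, tr_mul_comm k g]
      ring

end SL2

theorem product_relation (ξ η ζ : SL2C) (t₁ t₂ t₃ t₁₂ t₂₃ t₁₃ : ℂ)
    (h1 : trC ξ = t₁) (h2 : trC η = t₂) (h3 : trC ζ = t₃)
    (h12 : trC (ξ * η) = t₁₂) (h23 : trC (η * ζ) = t₂₃) (h13 : trC (ξ * ζ) = t₁₃) :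
    trC (ξ * η * ζ) * trC (ξ * ζ * η) =
      (t₁ ^ 2 + t₂ ^ 2 + t₃ ^ 2) + (t₁₂ ^ 2 + t₂₃ ^ 2 + t₁₃ ^ 2) -
        (t₁ * t₂ * t₁₂ + t₂ * t₃ * t₂₃ + t₃ * t₁ * t₁₃) + t₁₂ * t₂₃ * t₁₃ - 4 := by
  subst h1 h2 h3 h12 h23 h13
  exact SL2.tr_mul_mul_mul_tr_mul_mul ξ η ζ
end

section
/- Suppose x, y, z ∈ ℝ satisfy x² + y² + z² − xyz < 4. Then either all of |x|, |y|, |z| are less than 2, or all of |x|, |y|, |z| are greater than 2. -/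
/-!
The identity `(x² - 4)(y² - 4) = (2z - xy)² - 4(x² + y² + z² - xyz - 4)` shows that
`(x² - 4)(y² - 4) > 0` whenever `x² + y² + z² - xyz < 4`; by symmetry the same holds for
`(y² - 4)(z² - 4)`, so `x² - 4`, `y² - 4`, `z² - 4` all have one and the same strict sign.
-/

section

variable {R : Type*} [CommRing R] [LinearOrder R] [IsStrictOrderedRing R]

lemma sq_sub_four_mul_sq_sub_four_pos {x y z : R} (h : x ^ 2 + y ^ 2 + z ^ 2 - x * y * z < 4) :
    0 < (x ^ 2 - 4) * (y ^ 2 - 4) := by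
  linear_combination sq_nonneg (2 * z - x * y) + 4 * h

lemma abs_lt_two_iff_sq_sub_four_neg (x : R) : |x| < 2 ↔ x ^ 2 - 4 < 0 := by
  rw [sub_neg, show (4 : R) = 2 ^ 2 by norm_num, sq_lt_sq, abs_two]

lemma two_lt_abs_iff_sq_sub_four_pos (x : R) : 2 < |x| ↔ 0 < x ^ 2 - 4 := by
  rw [sub_pos, show (4 : R) = 2 ^ 2 by norm_num, sq_lt_sq, abs_two]

end

theorem real_character_dichotomy (x y z : ℝ)
    (h : x ^ 2 + y ^ 2 + z ^ 2 - x * y * z < 4) :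
    (|x| < 2 ∧ |y| < 2 ∧ |z| < 2) ∨ (|x| > 2 ∧ |y| > 2 ∧ |z| > 2) := by
  have hxy := sq_sub_four_mul_sq_sub_four_pos h
  have hyz := sq_sub_four_mul_sq_sub_four_pos (x := y) (y := z) (z := x) (by linarith)
  simp only [abs_lt_two_iff_sq_sub_four_neg, gt_iff_lt, two_lt_abs_iff_sq_sub_four_pos]
  rcases pos_and_pos_or_neg_and_neg_of_mul_pos hxy with ⟨hx, hy⟩ | ⟨hx, hy⟩
  · exact Or.inr ⟨hx, hy, pos_of_mul_pos_right hyz hy.le⟩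
  · exact Or.inl ⟨hx, hy, neg_of_mul_pos_right hyz hy.le⟩
end

section
/- Let X, Y ∈ SL(2,ℝ) with traces x = tr X, y = tr Y, z = tr(XY), and assume x, y, z < −2. Define X̂ = (2X − x·I)/√(x²−4) and Ŷ = (2Y − y·I)/√(y²−4). Then ½·tr(X̂Ŷ) = (2z − xy)/√((x²−4)(y²−4)), and this quantity is strictly less than −1. -/
open Matrix

abbrev SL2R := Matrix.SpecialLinearGroup (Fin 2) ℝ

noncomputable def trR (g : SL2R) : ℝ := Matrix.trace (g : Matrix (Fin 2) (Fin 2) ℝ)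

/-!
Since `tr 1 = 2`, expanding gives `½ tr((2X - x)(2Y - y)) = 2 tr(XY) - tr X tr Y`, whence the
formula. For the bound, `z < -2` gives `2z - xy < -(xy + 4)`, and
`(xy + 4)² - (x² - 4)(y² - 4) = 4(x + y)² > 0` shows `√((x² - 4)(y² - 4)) < xy + 4`.
-/

theorem Matrix.trace_two_smul_sub_trace_mul {R : Type*} [CommRing R]
    (A B : Matrix (Fin 2) (Fin 2) R) :
    trace ((2 • A - trace A • 1) * (2 • B - trace B • 1)) =
      4 * trace (A * B) - 2 * trace A * trace B := by
  simp only [two_nsmul, sub_mul, mul_sub, add_mul, mul_add, Matrix.smul_mul, Matrix.mul_smul,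
    Matrix.one_mul, Matrix.mul_one, smul_smul, trace_add, trace_sub, trace_smul,
    trace_one, Fintype.card_fin, smul_eq_mul]
  push_cast
  ring

theorem Real.sqrt_mul_sq_sub_four_lt {x y : ℝ} (hxy : 0 < x * y + 4) (hsum : x + y ≠ 0) :
    √((x ^ 2 - 4) * (y ^ 2 - 4)) < x * y + 4 := by
  have hgap : (x * y + 4) ^ 2 - (x ^ 2 - 4) * (y ^ 2 - 4) = 4 * (x + y) ^ 2 := by ring
  rw [Real.sqrt_lt' hxy]
  nlinarith [sq_pos_of_ne_zero hsum]

theorem reflections_inner_product (X Y : SL2R) (x y z : ℝ)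
    (hx : trR X = x) (hy : trR Y = y) (hz : trR (X * Y) = z)
    (hx2 : x < -2) (hy2 : y < -2) (hz2 : z < -2)
    (Xhat Yhat : Matrix (Fin 2) (Fin 2) ℝ)
    (hXhat : Xhat = (Real.sqrt (x ^ 2 - 4))⁻¹ •
        (2 • (X : Matrix (Fin 2) (Fin 2) ℝ) - x • (1 : Matrix (Fin 2) (Fin 2) ℝ)))
    (hYhat : Yhat = (Real.sqrt (y ^ 2 - 4))⁻¹ •
        (2 • (Y : Matrix (Fin 2) (Fin 2) ℝ) - y • (1 : Matrix (Fin 2) (Fin 2) ℝ))) :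
    (1 / 2) * Matrix.trace (Xhat * Yhat) =
        (2 * z - x * y) / Real.sqrt ((x ^ 2 - 4) * (y ^ 2 - 4)) ∧
    (1 / 2) * Matrix.trace (Xhat * Yhat) < -1 := by
  have hsx : 0 < √(x ^ 2 - 4) := Real.sqrt_pos.2 (by nlinarith)
  have hsy : 0 < √(y ^ 2 - 4) := Real.sqrt_pos.2 (by nlinarith)
  have hsxy : √((x ^ 2 - 4) * (y ^ 2 - 4)) = √(x ^ 2 - 4) * √(y ^ 2 - 4) :=
    Real.sqrt_mul (by nlinarith) _
  have hformula : (1 / 2) * trace (Xhat * Yhat) =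
      (2 * z - x * y) / √((x ^ 2 - 4) * (y ^ 2 - 4)) := by
    have htX : trace (X : Matrix (Fin 2) (Fin 2) ℝ) = x := hx
    have htY : trace (Y : Matrix (Fin 2) (Fin 2) ℝ) = y := hy
    have htXY : trace ((X : Matrix (Fin 2) (Fin 2) ℝ) * (Y : Matrix (Fin 2) (Fin 2) ℝ)) = z :=
      hz
    have hXY := Matrix.trace_two_smul_sub_trace_mul (X : Matrix (Fin 2) (Fin 2) ℝ) Y
    rw [htX, htY, htXY] at hXY
    rw [hXhat, hYhat, Matrix.smul_mul, Matrix.mul_smul, trace_smul, trace_smul, hXY, hsxy,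
      smul_eq_mul, smul_eq_mul]
    field_simp
    ring
  refine ⟨hformula, ?_⟩
  rw [hformula, div_lt_iff₀ (hsxy ▸ mul_pos hsx hsy)]
  have hsqrt := Real.sqrt_mul_sq_sub_four_lt (x := x) (y := y) (by nlinarith) (by linarith)
  linarith
end
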